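/- arXiv:1805.09697 — 3 statements merged into one kernel-verified Lean document; each statement's English description precedes it below -/
import Mathlib

section
/- Let P and Q be probability distributions on Σ^m (for a finite alphabet Σ) that factorize as P(w₁,...,w_m) = ∏_{i=1}^m p_i(w_i | w₁,...,w_{i-1}) and Q(w₁,...,w_m) = ∏_{i=1}^m q_i(w_i | w₁,...,w_{i-1}), where for each i and each prefix (w₁,...,w_{i-1}), p_i(· | w₁,...,w_{i-1}) and q_i(· | w₁,...,w_{i-1}) are probability distributions on Σ. Suppose for every i and every prefix, the squared Hellinger distance between p_i(·|prefix) and q_i(·|prefix) is at most γ, where γ ∈ [0,1]. Then H²(P,Q) ≤ 1 - (1-γ)^m ≤ m·γ. -/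
lemma key {A : Type*} [Fintype A] : ∀ (m : ℕ) (c : ℝ), 0 ≤ c →
    ∀ (f : (i : Fin m) → ((j : Fin (i : ℕ)) → A) → A → ℝ),
    (∀ i pre a, 0 ≤ f i pre a) → (∀ i pre, c ≤ ∑ a, f i pre a) →
    c ^ m ≤ ∑ w : Fin m → A, ∏ i, f i (fun j => w ⟨j.1, lt_trans j.2 i.2⟩) (w i) := by
  intro m
  induction m with
  | zero => intro c hc f hf0 hfs; simp
  | succ n ih =>
    intro c hc f hf0 hfs
    set e := Fin.consEquiv (fun _ : Fin (n+1) => A)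
    rw [← Equiv.sum_comp e, Fintype.sum_prod_type]
    have hterm : ∀ (a : A) (w' : Fin n → A),
        (∏ i : Fin (n+1), f i (fun j => (e (a, w')) ⟨j.1, lt_trans j.2 i.2⟩) ((e (a, w')) i))
        = f 0 (fun j => absurd j.2 (Nat.not_lt_zero _)) a *
          ∏ i : Fin n, f i.succ (Fin.cons a (fun j => w' ⟨j.1, lt_trans j.2 i.2⟩)) (w' i) := by
      intro a w'
      rw [Fin.prod_univ_succ]
      congr 1
      · congr 1
        funext j; exact absurd j.2 (Nat.not_lt_zero _)
      · apply Finset.prod_congr rfl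
        intro i _
        congr 1
        funext j
        simp only [e, Fin.consEquiv_apply]
        induction j using Fin.cases with
        | zero => simp
        | succ k =>
          have : (⟨(Fin.succ k).1, lt_trans (Fin.succ k).2 i.succ.2⟩ : Fin (n+1)) = Fin.succ ⟨k.1, lt_trans k.2 i.2⟩ := rfl
          rw [this, Fin.cons_succ, Fin.cons_succ]
    have step : ∀ a : A, c ^ n ≤ ∑ w' : Fin n → A,
        ∏ i : Fin n, f i.succ (Fin.cons a (fun j => w' ⟨j.1, lt_trans j.2 i.2⟩)) (w' i) :=
      fun a => ih c hc (fun i pre b => f i.succ (Fin.cons a pre) b)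
        (fun i pre b => hf0 i.succ (Fin.cons a pre) b)
        (fun i pre => hfs i.succ (Fin.cons a pre))
    calc c ^ (n+1) = c * c ^ n := by ring
      _ ≤ (∑ a, f 0 (fun j => absurd j.2 (Nat.not_lt_zero _)) a) * c ^ n :=
          mul_le_mul_of_nonneg_right (hfs 0 _) (pow_nonneg hc n)
      _ = ∑ a, f 0 (fun j => absurd j.2 (Nat.not_lt_zero _)) a * c ^ n := by rw [Finset.sum_mul]
      _ ≤ ∑ a, f 0 (fun j => absurd j.2 (Nat.not_lt_zero _)) a *
            ∑ w' : Fin n → A, ∏ i : Fin n, f i.succ (Fin.cons a (fun j => w' ⟨j.1, lt_trans j.2 i.2⟩)) (w' i) :=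
          Finset.sum_le_sum fun a _ => mul_le_mul_of_nonneg_left (step a) (hf0 0 _ a)
      _ = ∑ a, ∑ w' : Fin n → A, ∏ i : Fin (n+1), f i (fun j => (e (a, w')) ⟨j.1, lt_trans j.2 i.2⟩) ((e (a, w')) i) := by
          refine Finset.sum_congr rfl fun a _ => ?_
          rw [Finset.mul_sum]
          exact Finset.sum_congr rfl fun w' _ => (hterm a w').symm


lemma sqrt_prod' {ι : Type*} (s : Finset ι) (f : ι → ℝ) (h : ∀ i ∈ s, 0 ≤ f i) :
    Real.sqrt (∏ i ∈ s, f i) = ∏ i ∈ s, Real.sqrt (f i) := by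
  induction s using Finset.cons_induction with
  | empty => simp
  | cons a s ha ih =>
    rw [Finset.prod_cons, Finset.prod_cons, Real.sqrt_mul (h a (Finset.mem_cons_self a s)),
      ih (fun i hi => h i (Finset.mem_cons_of_mem hi))]

/-- Subadditivity of squared Hellinger distance for chain-factorized distributions:
closeness of all local conditional distributions implies closeness of the joint. -/
theorem stmt_4 {A : Type*} [Fintype A] [Nonempty A] (m : ℕ) (hm : 1 ≤ m)
    (p q : (i : Fin m) → ((j : Fin (i : ℕ)) → A) → A → ℝ)
    (γ : ℝ) (hγ0 : 0 ≤ γ) (hγ1 : γ ≤ 1)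
    (hp0 : ∀ i pre a, 0 ≤ p i pre a) (hq0 : ∀ i pre a, 0 ≤ q i pre a)
    (hp1 : ∀ i pre, ∑ a, p i pre a = 1) (hq1 : ∀ i pre, ∑ a, q i pre a = 1)
    (hclose : ∀ i pre, 1 - ∑ a, Real.sqrt (p i pre a * q i pre a) ≤ γ)
    (P Q : (Fin m → A) → ℝ)
    (hP : ∀ w, P w = ∏ i, p i (fun j => w ⟨j.1, lt_trans j.2 i.2⟩) (w i))
    (hQ : ∀ w, Q w = ∏ i, q i (fun j => w ⟨j.1, lt_trans j.2 i.2⟩) (w i)) :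
    1 - ∑ w, Real.sqrt (P w * Q w) ≤ 1 - (1 - γ) ^ m ∧
      1 - (1 - γ) ^ m ≤ m * γ := by
  constructor
  · have hkey := key m (1 - γ) (by linarith)
      (fun i pre a => Real.sqrt (p i pre a * q i pre a))
      (fun i pre a => Real.sqrt_nonneg _)
      (fun i pre => by linarith [hclose i pre])
    have heq : ∀ w : Fin m → A, Real.sqrt (P w * Q w) =
        ∏ i, Real.sqrt (p i (fun j => w ⟨j.1, lt_trans j.2 i.2⟩) (w i) *
          q i (fun j => w ⟨j.1, lt_trans j.2 i.2⟩) (w i)) := by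
      intro w
      rw [hP, hQ, ← Finset.prod_mul_distrib]
      exact sqrt_prod' _ _ (fun i _ => mul_nonneg (hp0 _ _ _) (hq0 _ _ _))
    rw [Finset.sum_congr rfl (fun w _ => heq w)]
    linarith [hkey]
  · have hb := one_add_mul_le_pow (a := -γ) (by linarith) m
    have : (1 : ℝ) + m * (-γ) ≤ (1 - γ) ^ m := by
      rw [sub_eq_add_neg]; exact hb
    linarith
end

section
/- Let T be an undirected tree on vertices {V₁,...,V_ℓ} with iid Bernoulli(1/2) edge bits, and additionally each vertex V_i has a private iid Bernoulli(1/2) bit R_i. Suppose at least one vertex V_j computes XOR of its incident edge bits together with R_j (all other vertices compute XOR or XNOR of just their incident edge bits). Then the joint distribution of (V₁,...,V_ℓ) is uniform on {0,1}^ℓ. -/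
/-- XOR-tree with private bits: if every vertex is an XOR or XNOR of its incident edge
bits, possibly including its own private bit, and at least one vertex's XOR includes its
private bit, then the joint distribution of the vertex values is uniform on {0,1}^ℓ
(each value vector has exactly a 2^{-ℓ} fraction of the edge/private-bit assignments). -/
theorem stmt_12 (ℓ : ℕ) (hℓ : 1 ≤ ℓ) (G : SimpleGraph (Fin ℓ)) [DecidableRel G.Adj]
    (hT : G.IsTree)
    (incl : Fin ℓ → Bool) (flip : Fin ℓ → ZMod 2)
    (hincl : ∃ j, incl j = true ∧ flip j = 0)
    (out : (Sym2 (Fin ℓ) → ZMod 2) × (Fin ℓ → ZMod 2) → Fin ℓ → ZMod 2)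
    (hout : ∀ x i, out x i =
      flip i + (if incl i then x.2 i else 0) + ∑ e ∈ G.incidenceFinset i, x.1 e) :
    ∀ v : Fin ℓ → ZMod 2,
      ((Finset.univ.filter (fun x => out x = v)).card : ℝ) * 2 ^ ℓ =
        (Fintype.card ((Sym2 (Fin ℓ) → ZMod 2) × (Fin ℓ → ZMod 2)) : ℝ) := by
  classical
  intro v
  obtain ⟨j, hj, hjf⟩ := hincl
  -- the "effect" of a perturbation of the inputs on the outputs
  let E : (Sym2 (Fin ℓ) → ZMod 2) × (Fin ℓ → ZMod 2) → (Fin ℓ → ZMod 2) := fun y i =>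
    (if incl i then y.2 i else 0) + ∑ e ∈ G.incidenceFinset i, y.1 e
  have hEadd : ∀ a b, E (a + b) = E a + E b := by
    intro a b; funext i
    simp only [E, Prod.fst_add, Prod.snd_add, Pi.add_apply, Finset.sum_add_distrib]
    split <;> ring
  let E' : ((Sym2 (Fin ℓ) → ZMod 2) × (Fin ℓ → ZMod 2)) →+ (Fin ℓ → ZMod 2) :=
    AddMonoidHom.mk' E hEadd
  have hEsmul : ∀ (c : ZMod 2) a, E (c • a) = c • E a := by
    intro c a; funext i
    simp only [E, Prod.smul_fst, Prod.smul_snd, Pi.smul_apply, smul_eq_mul,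
      Finset.mul_sum, mul_add, mul_ite, mul_zero]
  have hout' : ∀ x y, out (x + y) = fun i => out x i + E y i := by
    intro x y; funext i
    simp only [hout, Prod.fst_add, Prod.snd_add, Pi.add_apply, Finset.sum_add_distrib, E]
    split <;> ring
  -- every standard basis vector is in the range of E
  have base : ∃ y, E y = Pi.single j 1 := by
    refine ⟨(0, Pi.single j 1), ?_⟩
    funext i
    simp only [E, Pi.zero_apply, Finset.sum_const_zero, add_zero]
    by_cases h : i = j
    · subst h; simp [hj]
    · simp [Pi.single_eq_of_ne h, h]
  have step : ∀ a b : Fin ℓ, G.Adj a b → (∃ y, E y = Pi.single a 1) →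
      ∃ y, E y = Pi.single b 1 := by
    rintro a b hab ⟨y, hy⟩
    refine ⟨y + (Pi.single s(a, b) 1, 0), ?_⟩
    rw [hEadd, hy]
    funext i
    have hedge : E (Pi.single s(a, b) 1, 0) i = if i = a ∨ i = b then 1 else 0 := by
      simp only [E, ite_self, Pi.zero_apply, zero_add, Finset.sum_pi_single']
      have : s(a, b) ∈ G.incidenceFinset i ↔ (i = a ∨ i = b) := by
        rw [SimpleGraph.mem_incidenceFinset, SimpleGraph.mk'_mem_incidenceSet_iff]
        exact ⟨fun h => h.2, fun h => ⟨hab, h⟩⟩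
      simp [this]
    rw [Pi.add_apply, hedge]
    have hne : a ≠ b := hab.ne
    by_cases ha : i = a
    · subst ha
      rw [if_pos (Or.inl rfl), Pi.single_eq_same, Pi.single_eq_of_ne hne]
      decide
    · by_cases hb : i = b
      · subst hb
        rw [if_pos (Or.inr rfl), Pi.single_eq_of_ne (Ne.symm hne), Pi.single_eq_same,
          zero_add]
      · rw [if_neg (by tauto), Pi.single_eq_of_ne ha, Pi.single_eq_of_ne hb, add_zero]
  have hsingle : ∀ i : Fin ℓ, ∃ y, E y = Pi.single i 1 := by
    have key : ∀ (a b : Fin ℓ) (w : G.Walk a b),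
        (∃ y, E y = Pi.single a 1) → ∃ y, E y = Pi.single b 1 := by
      intro a b w
      induction w with
      | nil => exact id
      | cons h p ih => exact fun ha => ih (step _ _ h ha)
    intro i
    obtain ⟨w⟩ := hT.isConnected.preconnected j i
    exact key j i w base
  -- E is surjective
  have hsurj : ∀ d : Fin ℓ → ZMod 2, ∃ y, E y = d := by
    intro d
    choose Y hY using hsingle
    refine ⟨∑ i, d i • Y i, ?_⟩
    have h1 : E (∑ i, d i • Y i) = ∑ i, E (d i • Y i) := map_sum E' _ _
    rw [h1]
    have h2 : ∀ i, E (d i • Y i) = Pi.single i (d i) := by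
      intro i
      rw [hEsmul, hY]
      funext k
      by_cases h : k = i
      · subst h; simp
      · simp [Pi.single_eq_of_ne h]
    simp_rw [h2]
    exact Finset.univ_sum_single d
  -- z + z = 0
  have hself : ∀ z : (Sym2 (Fin ℓ) → ZMod 2) × (Fin ℓ → ZMod 2), z + z = 0 := by
    intro z
    have : z + z = (2 : ZMod 2) • z := (two_smul (ZMod 2) z).symm
    rw [this, show (2 : ZMod 2) = 0 by decide, zero_smul]
  -- all fibers have the same cardinality
  have hfib : ∀ v' : Fin ℓ → ZMod 2,
      (Finset.univ.filter (fun x => out x = v')).card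
        = (Finset.univ.filter (fun x => out x = v)).card := by
    intro v'
    obtain ⟨y, hy⟩ := hsurj (fun i => v i + v' i)
    apply Finset.card_bij' (fun x _ => x + y) (fun x _ => x + y)
    · intro x hx
      simp only [Finset.mem_filter, Finset.mem_univ, true_and] at hx ⊢
      rw [hout', hx, hy]
      funext i
      have : ∀ a b : ZMod 2, b + (a + b) = a := by decide
      exact this (v i) (v' i)
    · intro x hx
      simp only [Finset.mem_filter, Finset.mem_univ, true_and] at hx ⊢
      rw [hout', hx, hy]
      funext i
      have : ∀ a b : ZMod 2, a + (a + b) = b := by decide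
      exact this (v i) (v' i)
    · intro x _; rw [add_assoc, hself, add_zero]
    · intro x _; rw [add_assoc, hself, add_zero]
  -- counting
  have hcount : (Finset.univ.filter (fun x => out x = v)).card * 2 ^ ℓ
      = Fintype.card ((Sym2 (Fin ℓ) → ZMod 2) × (Fin ℓ → ZMod 2)) := by
    have hcard : (Finset.univ : Finset ((Sym2 (Fin ℓ) → ZMod 2) × (Fin ℓ → ZMod 2))).card
        = ∑ v' : Fin ℓ → ZMod 2, (Finset.univ.filter (fun x => out x = v')).card :=
      Finset.card_eq_sum_card_fiberwise (fun x _ => Finset.mem_univ _)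
    rw [Fintype.card, hcard]
    simp_rw [hfib]
    rw [Finset.sum_const, Finset.card_univ, smul_eq_mul, mul_comm]
    congr 1
    simp [ZMod.card]
  exact_mod_cast hcount
end

section
/- (Y-R Reduction inequality, core step) Let Σ be a finite alphabet, let Y: Σ^{m+1} → [0,1], and let F: Σ^m ×Σ → [0,1] be of the form F(a, a_r) = nested sums of nonnegative factors each of whose innermost sums is at most 1 (i.e., 0 ≤ Σ_{a_r} (inner factor) ≤ 1 at every level). Suppose for every a ∈ Σ^m and every a_r ∈ Σ we have G(a, a_r) ≥ 1 - bγ where G(a,a_r) denotes the nested sum weighted by Y(a, a_r). Define Y^new(a) = min_{a_r} Y(a, a_r). Then the nested sum weighted by Y^new(a) is at least 1 - |Σ|·b·γ for every a. -/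
/-- Y-R reduction inequality (single-level version): if Σ_x X(x) ≤ 1, Y takes values
in [0,1], and Σ_x X(x)·Y(x,a_r) ≥ 1 - bγ for every a_r, then replacing Y by its
pointwise minimum over a_r loses at most a |Σ| factor: Σ_x X(x)·Y^new(x) ≥ 1 - |Σ|bγ. -/
theorem stmt_13 {A : Type*} [Fintype A] [Nonempty A]
    (X : A → ℝ) (Y : A → A → ℝ) (b γ : ℝ)
    (hX0 : ∀ x, 0 ≤ X x) (hX1 : ∀ x, X x ≤ 1) (hXsum : ∑ x, X x ≤ 1)
    (hY : ∀ x a, 0 ≤ Y x a ∧ Y x a ≤ 1)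
    (hb : 0 ≤ b) (hγ : 0 ≤ γ) (hbγ : b * γ ≤ 1)
    (hcon : ∀ a, 1 - b * γ ≤ ∑ x, X x * Y x a) :
    1 - (Fintype.card A : ℝ) * b * γ ≤
      ∑ x, X x * (Finset.univ.inf' Finset.univ_nonempty fun a => Y x a) := by
  classical
  set n : ℝ := (Fintype.card A : ℝ) with hn
  have hn1 : (1 : ℝ) ≤ n := by
    have : 1 ≤ Fintype.card A := Fintype.card_pos
    rw [hn]; exact_mod_cast this
  -- key pointwise bound: min ≥ sum - (n-1)
  have hmin : ∀ x, (∑ a, Y x a) - (n - 1) ≤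
      Finset.univ.inf' Finset.univ_nonempty fun a => Y x a := by
    intro x
    obtain ⟨a₀, -, ha₀⟩ := Finset.exists_mem_eq_inf' (Finset.univ_nonempty) (fun a => Y x a)
    rw [ha₀]
    have : ∑ a, Y x a ≤ Y x a₀ + (n - 1) := by
      have := Finset.sum_erase_add Finset.univ (fun a => Y x a) (Finset.mem_univ a₀)
      rw [← this]
      have hle : ∑ a ∈ Finset.univ.erase a₀, Y x a ≤ n - 1 := by
        have := Finset.sum_le_card_nsmul (Finset.univ.erase a₀) (fun a => Y x a) 1
          (fun a _ => (hY x a).2)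
        simp only [nsmul_eq_mul, mul_one] at this
        have hc : ((Finset.univ.erase a₀).card : ℝ) = n - 1 := by
          rw [Finset.card_erase_of_mem (Finset.mem_univ a₀)]
          simp [hn, Nat.cast_sub Fintype.card_pos]
        linarith [this, hc ▸ this]
      linarith
    linarith
  calc 1 - n * b * γ ≤ ∑ x, X x * ((∑ a, Y x a) - (n - 1)) := by
        have key : ∑ x, X x * ((∑ a, Y x a) - (n - 1))
            = (∑ a, ∑ x, X x * Y x a) - (n - 1) * ∑ x, X x := by
          rw [Finset.sum_comm, Finset.mul_sum, ← Finset.sum_sub_distrib]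
          apply Finset.sum_congr rfl
          intro x _
          rw [mul_sub, Finset.mul_sum]
          ring
        rw [key]
        have h1 : n * (1 - b * γ) ≤ ∑ a, ∑ x, X x * Y x a := by
          have := Finset.card_nsmul_le_sum Finset.univ
            (fun a => ∑ x, X x * Y x a) (1 - b * γ) (fun a _ => hcon a)
          simpa [nsmul_eq_mul, hn] using this
        have h2 : (n - 1) * ∑ x, X x ≤ (n - 1) * 1 :=
          mul_le_mul_of_nonneg_left hXsum (by linarith)
        nlinarith
    _ ≤ ∑ x, X x * (Finset.univ.inf' Finset.univ_nonempty fun a => Y x a) := by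
        apply Finset.sum_le_sum
        intro x _
        exact mul_le_mul_of_nonneg_left (hmin x) (hX0 x)
end
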